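/- arXiv:2012.12168 — 4 statements merged into one kernel-verified Lean document; each statement's English description precedes it below -/
import Mathlib

section
/- Let ℓ₁, ℓ₂, N be positive integers with ℓ₁ + ℓ₂ ≥ N, and define for 0 ≤ n ≤ min(ℓ₁,N) the polynomial 𝒬ₙ(x) = Σ_{k=0}^{n} (-n)_k (n-ℓ₁-ℓ₂-1)_k (-x)_k / ((-ℓ₁)_k (-N)_k k!). Then for 0 ≤ m, n ≤ min(ℓ₁,N) + min(ℓ₂,N) - N with m ≠ n, Σ_{x=N-min(ℓ₂,N)}^{min(ℓ₁,N)} 𝒬ₙ(x) 𝒬ₘ(x) 𝓗(x) = 0, where 𝓗(x) = binom(ℓ₁,x)binom(ℓ₂,N-x)/binom(ℓ₁+ℓ₂,N). -/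
/-- Pochhammer symbol `(a)_n = a(a+1)⋯(a+n-1)`. -/
def poch {R : Type*} [CommRing R] (a : R) (n : ℕ) : R :=
  ∏ i ∈ Finset.range n, (a + i)

/-- Hahn polynomial with negative integer parameters `a = -l1-1`, `b = -l2-1`. -/
def hahnQ (l1 l2 Nq : ℚ) (n : ℕ) (x : ℚ) : ℚ :=
  ∑ k ∈ Finset.range (n + 1),
    poch (-(n : ℚ)) k * poch ((n : ℚ) - l1 - l2 - 1) k * poch (-x) k /
      (poch (-l1) k * poch (-Nq) k * (k.factorial : ℚ))

/-- Hypergeometric distribution. -/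
def hyperH (l1 l2 N x : ℕ) : ℚ :=
  ((l1.choose x : ℚ) * (l2.choose (N - x) : ℚ)) / ((l1 + l2).choose N : ℚ)

open Finset

lemma pochSucc (a : ℚ) (j : ℕ) : poch a (j + 1) = poch a j * (a + j) := by
  simp [poch, prod_range_succ]

lemma pochSucc' (a : ℚ) (j : ℕ) : poch a (j + 1) = a * poch (a + 1) j := by
  unfold poch
  rw [prod_range_succ']
  have h : ∀ i ∈ range j, (a + ((i + 1 : ℕ) : ℚ)) = (a + 1) + (i : ℚ) := by
    intro i _; push_cast; ring
  rw [prod_congr rfl h]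
  simp [mul_comm]

lemma poch_nat_ne_zero {l k : ℕ} (h : k ≤ l) : poch (-(l : ℚ)) k ≠ 0 := by
  unfold poch
  rw [Finset.prod_ne_zero_iff]
  intro i hi hc
  rw [Finset.mem_range] at hi
  have hil : (i : ℚ) < (l : ℚ) := by exact_mod_cast lt_of_lt_of_le hi h
  linarith

lemma hahn_Lf (p q r x : ℚ) (k : ℕ) :
    (x - p) * (x - q) * poch (-(x + 1)) k
      - ((x - p) * (x - q) + x * (x + r - q)) * poch (-x) k
      + x * (x + r - q) * poch (-(x - 1)) k
    = (k : ℚ) * ((k : ℚ) - 1 - p - r) * poch (-x) k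
      - (k : ℚ) * ((k : ℚ) - 1 - p) * ((k : ℚ) - 1 - q) * poch (-x) (k - 1) := by
  cases k with
  | zero => simp [poch]
  | succ j =>
    have e1 : (-(x + 1) + 1 : ℚ) = -x := by ring
    have h1 : poch (-(x + 1)) (j + 1) = (-(x + 1)) * poch (-x) j := by
      rw [pochSucc', e1]
    have h2 : poch (-x) (j + 1) = poch (-x) j * (-x + j) := pochSucc _ _
    have h3 : poch (-(x - 1)) (j + 1) = poch (-(x - 1)) j * (-(x - 1) + j) := pochSucc _ _
    have hrel : (-x) * poch (-(x - 1)) j = ((j : ℚ) - x) * poch (-x) j := by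
      have e2 : (-x + 1 : ℚ) = -(x - 1) := by ring
      have t1 := pochSucc' (-x) j
      rw [e2] at t1
      have t2 := pochSucc (-x) j
      rw [t1] at t2
      rw [t2]; ring
    rw [h1, h2, h3]
    simp only [Nat.add_sub_cancel]
    push_cast
    linear_combination (-(x + r - q) * ((j : ℚ) + 1 - x)) * hrel

lemma hahn_ratio (l1 l2 N n k : ℕ) (h1 : n ≤ l1) (hN : n ≤ N) (hk : k < n) :
    poch (-(n : ℚ)) (k + 1) * poch ((n : ℚ) - l1 - l2 - 1) (k + 1) /
        (poch (-(l1 : ℚ)) (k + 1) * poch (-(N : ℚ)) (k + 1) * ((k + 1).factorial : ℚ))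
      * (((k : ℚ) + 1) * (((k : ℚ) + 1) - 1 - l1) * (((k : ℚ) + 1) - 1 - N))
    = poch (-(n : ℚ)) k * poch ((n : ℚ) - l1 - l2 - 1) k /
        (poch (-(l1 : ℚ)) k * poch (-(N : ℚ)) k * (k.factorial : ℚ))
      * (((k : ℚ) - n) * ((k : ℚ) + n - l1 - l2 - 1)) := by
  have hl : poch (-(l1 : ℚ)) k ≠ 0 := poch_nat_ne_zero (le_trans hk.le h1)
  have hNz : poch (-(N : ℚ)) k ≠ 0 := poch_nat_ne_zero (le_trans hk.le hN)
  have hf : (k.factorial : ℚ) ≠ 0 := by exact_mod_cast k.factorial_ne_zero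
  have hkl : (-(l1 : ℚ) + k) ≠ 0 := by
    have : (k : ℚ) < (l1 : ℚ) := by exact_mod_cast lt_of_lt_of_le hk h1
    intro hc; linarith
  have hkN : (-(N : ℚ) + k) ≠ 0 := by
    have : (k : ℚ) < (N : ℚ) := by exact_mod_cast lt_of_lt_of_le hk hN
    intro hc; linarith
  have hk1 : ((k : ℚ) + 1) ≠ 0 := by positivity
  rw [pochSucc, pochSucc, pochSucc, pochSucc, Nat.factorial_succ]
  push_cast
  field_simp
  ring

lemma hahn_diffeq (l1 l2 N n : ℕ) (h1 : n ≤ l1) (hN : n ≤ N) (x : ℚ) :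
    (x - l1) * (x - N) * hahnQ l1 l2 N n (x + 1)
      - ((x - l1) * (x - N) + x * (x + l2 - N)) * hahnQ l1 l2 N n x
      + x * (x + l2 - N) * hahnQ l1 l2 N n (x - 1)
    = (n : ℚ) * ((n : ℚ) - l1 - l2 - 1) * hahnQ l1 l2 N n x := by
  unfold hahnQ
  simp only [Finset.mul_sum]
  rw [← Finset.sum_sub_distrib, ← Finset.sum_add_distrib]
  have key : ∀ k ∈ range (n + 1),
      ((x - (l1:ℚ)) * (x - (N:ℚ)) *
          (poch (-(n : ℚ)) k * poch ((n : ℚ) - l1 - l2 - 1) k * poch (-(x + 1)) k /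
            (poch (-(l1:ℚ)) k * poch (-(N:ℚ)) k * (k.factorial : ℚ)))
        - ((x - (l1:ℚ)) * (x - (N:ℚ)) + x * (x + (l2:ℚ) - (N:ℚ))) *
          (poch (-(n : ℚ)) k * poch ((n : ℚ) - l1 - l2 - 1) k * poch (-x) k /
            (poch (-(l1:ℚ)) k * poch (-(N:ℚ)) k * (k.factorial : ℚ)))
        + x * (x + (l2:ℚ) - (N:ℚ)) *
          (poch (-(n : ℚ)) k * poch ((n : ℚ) - l1 - l2 - 1) k * poch (-(x - 1)) k /
            (poch (-(l1:ℚ)) k * poch (-(N:ℚ)) k * (k.factorial : ℚ))))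
      = (poch (-(n : ℚ)) k * poch ((n : ℚ) - l1 - l2 - 1) k /
            (poch (-(l1:ℚ)) k * poch (-(N:ℚ)) k * (k.factorial : ℚ)))
          * ((k : ℚ) * ((k : ℚ) - 1 - l1 - l2) * poch (-x) k)
        - (poch (-(n : ℚ)) k * poch ((n : ℚ) - l1 - l2 - 1) k /
            (poch (-(l1:ℚ)) k * poch (-(N:ℚ)) k * (k.factorial : ℚ)))
          * ((k : ℚ) * ((k : ℚ) - 1 - l1) * ((k : ℚ) - 1 - N) * poch (-x) (k - 1)) := by
    intro k _
    linear_combination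
      (poch (-(n : ℚ)) k * poch ((n : ℚ) - l1 - l2 - 1) k /
        (poch (-(l1:ℚ)) k * poch (-(N:ℚ)) k * (k.factorial : ℚ))) * hahn_Lf (l1:ℚ) (N:ℚ) (l2:ℚ) x k
  rw [Finset.sum_congr rfl key, Finset.sum_sub_distrib]
  have hsplit : ∑ k ∈ range (n + 1),
      (poch (-(n : ℚ)) k * poch ((n : ℚ) - l1 - l2 - 1) k /
          (poch (-(l1:ℚ)) k * poch (-(N:ℚ)) k * (k.factorial : ℚ)))
        * ((k : ℚ) * ((k : ℚ) - 1 - l1) * ((k : ℚ) - 1 - N) * poch (-x) (k - 1))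
    = ∑ k ∈ range (n + 1),
      (poch (-(n : ℚ)) k * poch ((n : ℚ) - l1 - l2 - 1) k /
          (poch (-(l1:ℚ)) k * poch (-(N:ℚ)) k * (k.factorial : ℚ)))
        * (((k : ℚ) - n) * ((k : ℚ) + n - l1 - l2 - 1) * poch (-x) k) := by
    rw [Finset.sum_range_succ' _ n, Finset.sum_range_succ]
    simp only [Nat.cast_zero, Nat.add_sub_cancel, sub_self, zero_mul, mul_zero, add_zero]
    apply Finset.sum_congr rfl
    intro k hk
    have hk' : k < n := mem_range.mp hk
    have hr := hahn_ratio l1 l2 N n k h1 hN hk'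
    push_cast
    linear_combination (poch (-x) k) * hr
  rw [hsplit, ← Finset.sum_sub_distrib]
  apply Finset.sum_congr rfl
  intro k _
  ring

/-- operator identity at natural points -/
lemma hahn_op (l1 l2 N n : ℕ) (h1 : n ≤ l1) (hN : n ≤ N) (x : ℕ) :
    ((x : ℚ) - l1) * ((x : ℚ) - N) *
        (hahnQ l1 l2 N n ((x + 1 : ℕ) : ℚ) - hahnQ l1 l2 N n x)
      - (x : ℚ) * ((x : ℚ) + l2 - N) *
        (hahnQ l1 l2 N n x - hahnQ l1 l2 N n ((x - 1 : ℕ) : ℚ))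
    = (n : ℚ) * ((n : ℚ) - l1 - l2 - 1) * hahnQ l1 l2 N n x := by
  cases x with
  | zero =>
    have h := hahn_diffeq l1 l2 N n h1 hN 0
    norm_num at h
    push_cast
    linear_combination h
  | succ y =>
    have h := hahn_diffeq l1 l2 N n h1 hN ((y : ℚ) + 1)
    have e1 : ((y : ℚ) + 1 + 1) = ((y + 1 + 1 : ℕ) : ℚ) := by push_cast; ring
    have e2 : ((y : ℚ) + 1 - 1) = ((y : ℕ) : ℚ) := by push_cast; ring
    rw [e1, e2] at h
    have e3 : ((y + 1 + 1 : ℕ) : ℚ) = ((y + 1 + 1 : ℕ) : ℚ) := rfl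
    push_cast
    push_cast at h
    linear_combination h

lemma choose_succ_q (a k : ℕ) :
    ((a.choose (k + 1) : ℚ)) * ((k : ℚ) + 1) = (a.choose k : ℚ) * ((a : ℚ) - k) := by
  rcases le_or_gt (k + 1) a with hle | hlt
  · have := Nat.choose_succ_right_eq a k
    have hc : ((a.choose (k + 1) * (k + 1) : ℕ) : ℚ) = ((a.choose k * (a - k) : ℕ) : ℚ) := by
      exact_mod_cast congrArg (Nat.cast : ℕ → ℚ) this
    push_cast [Nat.cast_sub (by omega : k ≤ a)] at hc
    linarith [hc]
  · rcases Nat.lt_or_ge k a with hka | hka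
    · -- k < a and a < k+1 → a = k
      have : a = k := by omega
      subst this
      simp [Nat.choose_succ_self]
    · -- a ≤ k : choose a (k+1) = 0 and choose a k = 0 unless a = k
      rcases eq_or_lt_of_le hka with heq | hlt2
      · subst heq; simp [Nat.choose_succ_self]
      · rw [Nat.choose_eq_zero_of_lt (by omega), Nat.choose_eq_zero_of_lt hlt2]
        simp

/-- weight pairing identity for x < N -/
lemma hahn_wBD (l1 l2 N : ℕ) (x : ℕ) (hx : x < N) :
    hyperH l1 l2 N x * (((x : ℚ) - l1) * ((x : ℚ) - N))
      = hyperH l1 l2 N (x + 1) * (((x + 1 : ℕ) : ℚ) * (((x + 1 : ℕ) : ℚ) + l2 - N)) := by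
  unfold hyperH
  rw [div_mul_eq_mul_div, div_mul_eq_mul_div]
  congr 1
  have e1 : N - x = (N - x - 1) + 1 := by omega
  have e2 : N - (x + 1) = N - x - 1 := by omega
  have h1 := choose_succ_q l1 x
  have h2 := choose_succ_q l2 (N - x - 1)
  have ec : ((N - x - 1 : ℕ) : ℚ) = (N : ℚ) - x - 1 := by
    have e3 : N - x - 1 = N - (x + 1) := by omega
    rw [e3, Nat.cast_sub (by omega : x + 1 ≤ N)]
    push_cast
    ring
  rw [e1, e2]
  rw [ec] at h2
  push_cast
  push_cast at h1 h2
  linear_combination (-((l2.choose (N - x - 1 + 1) : ℚ) * ((N:ℚ) - x))) * h1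
    + ((l1.choose (x + 1) : ℚ) * ((x:ℚ) + 1)) * h2

lemma sum_shift {a b : ℕ} (hab : a ≤ b) (Φ Ψ : ℕ → ℚ)
    (hstep : ∀ x, a ≤ x → x < b → Φ x = Ψ (x + 1))
    (hb : Φ b = 0) (ha : Ψ a = 0) :
    ∑ x ∈ Finset.Icc a b, Φ x = ∑ x ∈ Finset.Icc a b, Ψ x := by
  rw [← Finset.Ico_add_one_right_eq_Icc]
  rw [Finset.sum_Ico_succ_top hab, Finset.sum_eq_sum_Ico_succ_bot (by omega : a < b + 1) Ψ]
  rw [hb, ha, add_zero, zero_add]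
  have h1 : ∑ x ∈ Finset.Ico a b, Φ x = ∑ x ∈ Finset.Ico a b, Ψ (x + 1) := by
    apply Finset.sum_congr rfl
    intro x hx
    rw [Finset.mem_Ico] at hx
    exact hstep x hx.1 hx.2
  rw [h1, Finset.sum_Ico_eq_sum_range, Finset.sum_Ico_eq_sum_range]
  have e : b + 1 - (a + 1) = b - a := by omega
  rw [e]
  apply Finset.sum_congr rfl
  intro i _
  congr 1
  omega

lemma sbp {a b : ℕ} (hab : a ≤ b) (w B D f g : ℕ → ℚ)
    (hWBD : ∀ x, a ≤ x → x < b → w x * B x = w (x + 1) * D (x + 1))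
    (hBb : w b * B b = 0) (hDa : w a * D a = 0) :
    ∑ x ∈ Finset.Icc a b, w x * g x * (B x * (f (x + 1) - f x) - D x * (f x - f (x - 1)))
      = ∑ x ∈ Finset.Icc a b, w x * f x * (B x * (g (x + 1) - g x) - D x * (g x - g (x - 1))) := by
  have key : ∀ F G : ℕ → ℚ,
      ∑ x ∈ Finset.Icc a b, w x * B x * (F (x + 1) - F x) * G x
        = ∑ x ∈ Finset.Icc a b, w x * D x * (F x - F (x - 1)) * G (x - 1) := by
    intro F G
    apply sum_shift hab
    · intro x hax hxb
      rw [Nat.add_sub_cancel]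
      rw [show w x * B x * (F (x + 1) - F x) * G x
            = (w x * B x) * ((F (x + 1) - F x) * G x) by ring,
          hWBD x hax hxb]
      ring
    · rw [show w b * B b * (F (b + 1) - F b) * G b
            = (w b * B b) * ((F (b + 1) - F b) * G b) by ring, hBb]
      ring
    · rw [show w a * D a * (F a - F (a - 1)) * G (a - 1)
            = (w a * D a) * ((F a - F (a - 1)) * G (a - 1)) by ring, hDa]
      ring
  have hf := key f g
  have hg := key g f
  have lhs_eq : ∑ x ∈ Finset.Icc a b, w x * g x * (B x * (f (x + 1) - f x) - D x * (f x - f (x - 1)))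
      = (∑ x ∈ Finset.Icc a b, w x * B x * (f (x + 1) - f x) * g x)
        - ∑ x ∈ Finset.Icc a b, w x * D x * (f x - f (x - 1)) * g x := by
    rw [← Finset.sum_sub_distrib]
    exact Finset.sum_congr rfl (fun x _ => by ring)
  have rhs_eq : ∑ x ∈ Finset.Icc a b, w x * f x * (B x * (g (x + 1) - g x) - D x * (g x - g (x - 1)))
      = (∑ x ∈ Finset.Icc a b, w x * B x * (g (x + 1) - g x) * f x)
        - ∑ x ∈ Finset.Icc a b, w x * D x * (g x - g (x - 1)) * f x := by
    rw [← Finset.sum_sub_distrib]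
    exact Finset.sum_congr rfl (fun x _ => by ring)
  rw [lhs_eq, rhs_eq, hf, hg]
  have hz : ∑ x ∈ Finset.Icc a b,
      (w x * D x * (f x - f (x - 1)) * g (x - 1) - w x * D x * (f x - f (x - 1)) * g x)
    = ∑ x ∈ Finset.Icc a b,
      (w x * D x * (g x - g (x - 1)) * f (x - 1) - w x * D x * (g x - g (x - 1)) * f x) :=
    Finset.sum_congr rfl (fun x _ => by ring)
  rw [Finset.sum_sub_distrib, Finset.sum_sub_distrib] at hz
  linarith

theorem hahn_orthogonality (N l1 l2 : ℕ) (hN : 0 < N) (h1 : 0 < l1) (h2 : 0 < l2)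
    (h : N ≤ l1 + l2) (m n : ℕ)
    (hm : m ≤ min l1 N + min l2 N - N) (hn : n ≤ min l1 N + min l2 N - N) (hmn : m ≠ n) :
    ∑ x ∈ Finset.Icc (N - min l2 N) (min l1 N),
        hahnQ l1 l2 N n x * hahnQ l1 l2 N m x * hyperH l1 l2 N x = 0 := by
  set a := N - min l2 N with ha_def
  set b := min l1 N with hb_def
  have hab : a ≤ b := by omega
  have hn1 : n ≤ l1 := by omega
  have hnN : n ≤ N := by omega
  have hm1 : m ≤ l1 := by omega
  have hmN : m ≤ N := by omega
  set w : ℕ → ℚ := fun x => hyperH l1 l2 N x with hw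
  set B : ℕ → ℚ := fun x => ((x : ℚ) - l1) * ((x : ℚ) - N) with hB
  set D : ℕ → ℚ := fun x => (x : ℚ) * ((x : ℚ) + l2 - N) with hD
  set f : ℕ → ℚ := fun x => hahnQ l1 l2 N n x with hfd
  set g : ℕ → ℚ := fun x => hahnQ l1 l2 N m x with hgd
  have hWBD : ∀ x, a ≤ x → x < b → w x * B x = w (x + 1) * D (x + 1) := by
    intro x _ hxb
    have hxN : x < N := by omega
    have := hahn_wBD l1 l2 N x hxN
    simpa [hw, hB, hD] using this
  have hBb : w b * B b = 0 := by
    have : B b = 0 := by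
      simp only [hB]
      rcases min_le_iff.mp (le_refl b) with h' | h'
      all_goals {
        rcases Nat.le_total l1 N with hln | hln
        · have : b = l1 := by omega
          rw [this]; simp
        · have : b = N := by omega
          rw [this]; simp }
    rw [this, mul_zero]
  have hDa : w a * D a = 0 := by
    have : D a = 0 := by
      simp only [hD]
      rcases Nat.le_total l2 N with hln | hln
      · have haN : a = N - l2 := by omega
        have : ((a : ℚ) + l2 - N) = 0 := by
          rw [haN, Nat.cast_sub hln]; ring
        rw [this, mul_zero]
      · have : a = 0 := by omega
        rw [this]; simp
    rw [this, mul_zero]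
  have hsbp := sbp hab w B D f g hWBD hBb hDa
  have hopf : ∀ x : ℕ, B x * (f (x + 1) - f x) - D x * (f x - f (x - 1))
      = (n : ℚ) * ((n : ℚ) - l1 - l2 - 1) * f x := by
    intro x
    have := hahn_op l1 l2 N n hn1 hnN x
    simpa [hB, hD, hfd] using this
  have hopg : ∀ x : ℕ, B x * (g (x + 1) - g x) - D x * (g x - g (x - 1))
      = (m : ℚ) * ((m : ℚ) - l1 - l2 - 1) * g x := by
    intro x
    have := hahn_op l1 l2 N m hm1 hmN x
    simpa [hB, hD, hgd] using this
  set S : ℚ := ∑ x ∈ Finset.Icc a b, hahnQ l1 l2 N n x * hahnQ l1 l2 N m x * hyperH l1 l2 N x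
    with hS
  have hlhs : ∑ x ∈ Finset.Icc a b, w x * g x * (B x * (f (x + 1) - f x) - D x * (f x - f (x - 1)))
      = (n : ℚ) * ((n : ℚ) - l1 - l2 - 1) * S := by
    rw [hS, Finset.mul_sum]
    apply Finset.sum_congr rfl
    intro x _
    rw [hopf x]
    simp only [hw, hfd, hgd]
    ring
  have hrhs : ∑ x ∈ Finset.Icc a b, w x * f x * (B x * (g (x + 1) - g x) - D x * (g x - g (x - 1)))
      = (m : ℚ) * ((m : ℚ) - l1 - l2 - 1) * S := by
    rw [hS, Finset.mul_sum]
    apply Finset.sum_congr rfl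
    intro x _
    rw [hopg x]
    simp only [hw, hfd, hgd]
    ring
  have heq : (n : ℚ) * ((n : ℚ) - l1 - l2 - 1) * S
      = (m : ℚ) * ((m : ℚ) - l1 - l2 - 1) * S := by
    rw [← hlhs, ← hrhs, hsbp]
  have hfac : ((n : ℚ) - m) * ((n : ℚ) + m - l1 - l2 - 1) * S = 0 := by
    linear_combination heq
  have hnm : ((n : ℚ) - m) ≠ 0 := by
    intro hc
    apply hmn
    have hq : (m : ℚ) = n := by linarith
    exact_mod_cast hq
  have hsum : ((n : ℚ) + m - l1 - l2 - 1) ≠ 0 := by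
    have hle : n + m ≤ l1 + l2 := by omega
    have : (n : ℚ) + m ≤ (l1 : ℚ) + l2 := by exact_mod_cast hle
    intro hc; linarith
  have := mul_eq_zero.mp hfac
  rcases this with h' | h'
  · rcases mul_eq_zero.mp h' with h'' | h''
    · exact absurd h'' hnm
    · exact absurd h'' hsum
  · exact h'
end

section
/- Let ℓ₁, ℓ₂, N be positive integers with ℓ₁ + ℓ₂ ≥ N, and let 𝒬ₙ be the Hahn polynomials with negative parameters as above. Then for 0 ≤ n ≤ min(ℓ₁,N) + min(ℓ₂,N) - N, Σ_{x=N-min(ℓ₂,N)}^{min(ℓ₁,N)} 𝒬ₙ(x)² 𝓗(x) = (-1)ⁿ n! (-ℓ₂)ₙ (-ℓ₁-ℓ₂+N)ₙ (ℓ₁+ℓ₂+1-n) / ((-ℓ₁)ₙ (-ℓ₁-ℓ₂)ₙ (-N)ₙ (ℓ₁+ℓ₂+1-2n)). -/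
/-!
Expand one factor `𝒬ₙ` of the norm in the basis `(-x)_k`: the norm becomes a combination of the
moments `M(n, j) = ∑ₓ (-x)_j 𝒬ₙ(x) w(x)`, where `w(x) = C(ℓ₁, x) C(ℓ₂, N - x)` is the
unnormalised weight. A contiguity relation between the coefficients of `𝒬ₙ` and of `𝒬ₙ₊₁` with
all parameters raised by one yields a Rodrigues-type lowering relation: `(N + 1) 𝒬ₙ₊₁ w` is
`(ℓ₂ + 1)` times the backward difference of `𝒬ₙ w` with the smaller parameters. Summing by parts
gives `(N + 1) M(n + 1, j + 1) = (ℓ₂ + 1)(j + 1) M(n, j)` and `M(n + 1, 0) = 0`. Hence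
`M(n, j) = 0` for `j < n`, so only the leading coefficient of `𝒬ₙ` contributes, and `M(n, n)`
follows by induction from Vandermonde's identity.
-/

open Finset

section CommRing

variable {R : Type*} [CommRing R]

@[simp]
theorem poch_zero (a : R) : poch a 0 = 1 := by simp [poch]

theorem poch_succ (a : R) (n : ℕ) : poch a (n + 1) = poch a n * (a + n) :=
  prod_range_succ _ _

theorem poch_succ' (a : R) (n : ℕ) : poch a (n + 1) = a * poch (a + 1) n := by
  simp only [poch, prod_range_succ', Nat.cast_add, Nat.cast_one, Nat.cast_zero, add_zero]
  rw [mul_comm]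
  congr 1
  exact prod_congr rfl fun i _ => by ring

theorem poch_add (a : R) (m n : ℕ) : poch a (m + n) = poch a m * poch (a + m) n := by
  simp only [poch, prod_range_add, Nat.cast_add, add_assoc]

theorem poch_sub_one_mul (a : R) (n : ℕ) :
    (a - 1) * poch a n = poch (a - 1) n * (a + n - 1) := by
  have h := poch_succ' (a - 1) n
  rw [sub_add_cancel] at h
  rw [← h, poch_succ]
  ring

theorem poch_sub_poch_sub_one (a : R) (n : ℕ) :
    poch a (n + 1) - poch (a - 1) (n + 1) = (n + 1) * poch a n := by
  rw [poch_succ, poch_succ', sub_add_cancel]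
  ring

theorem poch_lowering (A B C x : R) (k : ℕ) :
    (A - x) * (B - x) * poch (-x) k - x * (C + x) * poch (-(x - 1)) k =
      (A - k) * (B - k) * poch (-x) k + (A + B + C - k) * poch (-x) (k + 1) := by
  have h₁ := poch_succ (-x) k
  have h₂ : poch (-x) (k + 1) = -x * poch (-(x - 1)) k := by
    rw [poch_succ', neg_sub', sub_neg_eq_add, add_comm]
  linear_combination (-(C + x)) * h₂ - (A + B - x - k) * h₁

theorem poch_neg_natCast_eq_zero {n k : ℕ} (h : n < k) : poch (-(n : R)) k = 0 :=
  prod_eq_zero (mem_range.2 h) (by simp)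

theorem poch_neg_natCast_self (n : ℕ) : poch (-(n : R)) n = (-1) ^ n * n.factorial := by
  induction n with
  | zero => simp
  | succ n ih =>
    rw [poch_succ', Nat.cast_succ, neg_add, neg_add_cancel_right, ih, Nat.factorial_succ]
    push_cast
    ring

theorem cast_add_one_sub_mul_choose (n k : ℕ) :
    ((n : R) + 1 - k) * ((n + 1).choose k : R) = (n + 1) * (n.choose k : R) := by
  rcases le_or_gt k (n + 1) with hk | hk
  · have h : ((n.choose k * (n + 1) : ℕ) : R) = (((n + 1).choose k * (n + 1 - k) : ℕ) : R) :=
      congrArg _ (Nat.choose_mul_succ_eq n k)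
    push_cast [Nat.cast_sub hk] at h
    linear_combination -h
  · rw [Nat.choose_eq_zero_of_lt hk, Nat.choose_eq_zero_of_lt (by omega)]
    simp

theorem cast_add_one_mul_choose_add_one (n k : ℕ) :
    ((k : R) + 1) * ((n + 1).choose (k + 1) : R) = (n + 1) * (n.choose k : R) := by
  have h := congrArg (Nat.cast : ℕ → R) (Nat.add_one_mul_choose_eq n k)
  push_cast at h
  linear_combination -h

variable [IsDomain R] [CharZero R]

theorem poch_neg_natCast_ne_zero {n k : ℕ} (h : k ≤ n) : poch (-(n : R)) k ≠ 0 :=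
  prod_ne_zero_iff.2 fun i hi => by
    rw [neg_add_eq_sub, sub_ne_zero]
    exact_mod_cast ((mem_range.1 hi).trans_le h).ne

theorem poch_natCast_sub_natCast_ne_zero {a b n : ℕ} (h : n + b ≤ a) :
    poch ((b : R) - a) n ≠ 0 := by
  have e : (b : R) - a = -((a - b : ℕ) : R) := by push_cast [Nat.cast_sub (by omega : b ≤ a)]; ring
  rw [e]
  exact poch_neg_natCast_ne_zero (by omega)

end CommRing

def hahnCoeff (l1 l2 N : ℚ) (n k : ℕ) : ℚ :=
  poch (-(n : ℚ)) k * poch ((n : ℚ) - l1 - l2 - 1) k /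
    (poch (-l1) k * poch (-N) k * (k.factorial : ℚ))

@[simp]
theorem hahnCoeff_zero_right (l1 l2 N : ℚ) (n : ℕ) : hahnCoeff l1 l2 N n 0 = 1 := by
  simp [hahnCoeff]

theorem hahnCoeff_eq_zero_of_lt (l1 l2 N : ℚ) {n k : ℕ} (h : n < k) :
    hahnCoeff l1 l2 N n k = 0 := by
  simp [hahnCoeff, poch_neg_natCast_eq_zero h]

theorem hahnQ_eq_sum_range (l1 l2 N : ℚ) {n K : ℕ} (hK : n < K) (x : ℚ) :
    hahnQ l1 l2 N n x = ∑ k ∈ range K, hahnCoeff l1 l2 N n k * poch (-x) k := by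
  rw [hahnQ, ← sum_subset (range_subset_range.2 hK) fun k _ hk => ?_]
  · exact sum_congr rfl fun k _ => by rw [hahnCoeff]; ring
  · rw [hahnCoeff_eq_zero_of_lt _ _ _ (by simpa using hk), zero_mul]

theorem hahnCoeff_succ_succ (l1 l2 N : ℚ) (n k : ℕ) (h1 : l1 + 1 ≠ 0) (hN : N + 1 ≠ 0) :
    (k + 1) * (l1 + 1) * (N + 1) * hahnCoeff (l1 + 1) (l2 + 1) (N + 1) (n + 1) (k + 1) =
      (n + 1) * (l1 + l2 + 2 - n) * hahnCoeff l1 l2 N n k := by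
  have e₁ : -((n + 1 : ℕ) : ℚ) + 1 = -n := by push_cast; ring
  have e₂ : ((n + 1 : ℕ) : ℚ) - (l1 + 1) - (l2 + 1) - 1 + 1 = n - l1 - l2 - 1 := by push_cast; ring
  have e₃ (a : ℚ) : -(a + 1) + 1 = -a := by ring
  simp only [hahnCoeff, poch_succ', e₁, e₂, e₃]
  rw [Nat.factorial_succ, Nat.cast_mul, Nat.cast_succ]
  field_simp
  push_cast
  ring

theorem hahnCoeff_succ (l1 l2 N : ℕ) {n : ℕ} (h1 : n ≤ l1) (hN : n ≤ N) (k : ℕ) :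
    (k + 1) * ((l1 : ℚ) - k) * ((N : ℚ) - k) * hahnCoeff l1 l2 N n (k + 1) =
      ((n : ℚ) - k) * ((l1 : ℚ) + l2 + 1 - n - k) * hahnCoeff l1 l2 N n k := by
  rcases lt_or_ge k n with hk | hk
  · have h1k : -(l1 : ℚ) + k ≠ 0 := by
      rw [neg_add_eq_sub, sub_ne_zero]; norm_cast; omega
    have hNk : -(N : ℚ) + k ≠ 0 := by
      rw [neg_add_eq_sub, sub_ne_zero]; norm_cast; omega
    have hp1 := poch_neg_natCast_ne_zero (R := ℚ) (show k ≤ l1 by omega)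
    have hpN := poch_neg_natCast_ne_zero (R := ℚ) (show k ≤ N by omega)
    simp only [hahnCoeff, poch_succ, Nat.factorial_succ]
    field_simp
    push_cast
    ring
  · rw [hahnCoeff_eq_zero_of_lt _ _ _ (Nat.lt_succ_of_le hk)]
    rcases hk.eq_or_lt with rfl | hk
    · simp
    · simp [hahnCoeff_eq_zero_of_lt _ _ _ hk]

theorem hahnCoeff_contiguous (l1 l2 N : ℕ) {n : ℕ} (h1 : n ≤ l1) (hN : n ≤ N) (k : ℕ) :
    ((l1 : ℚ) + 1) * ((N : ℚ) + 1) * hahnCoeff (l1 + 1) (l2 + 1) (N + 1) (n + 1) (k + 1) =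
      ((l1 : ℚ) - k) * ((N : ℚ) - k) * hahnCoeff l1 l2 N n (k + 1) +
        ((l1 : ℚ) + l2 + 2 - k) * hahnCoeff l1 l2 N n k := by
  have hk : (k : ℚ) + 1 ≠ 0 := by positivity
  apply mul_left_cancel₀ hk
  linear_combination hahnCoeff_succ_succ l1 l2 N n k (by positivity) (by positivity) -
    hahnCoeff_succ l1 l2 N h1 hN k

theorem hahnQ_lowering (l1 l2 N : ℕ) {n : ℕ} (h1 : n ≤ l1) (hN : n ≤ N) (x : ℚ) :
    ((l1 : ℚ) + 1) * ((N : ℚ) + 1) * hahnQ ↑(l1 + 1) ↑(l2 + 1) ↑(N + 1) (n + 1) x =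
      ((l1 : ℚ) + 1 - x) * ((N : ℚ) + 1 - x) * hahnQ l1 l2 N n x -
        x * ((l2 : ℚ) - N + x) * hahnQ l1 l2 N n (x - 1) := by
  have hK : n < n + 1 + 1 := by omega
  push_cast
  calc ((l1 : ℚ) + 1) * ((N : ℚ) + 1) * hahnQ (l1 + 1) (l2 + 1) (N + 1) (n + 1) x
      = ∑ k ∈ range (n + 1), ((l1 : ℚ) + 1) * ((N : ℚ) + 1) *
            hahnCoeff (l1 + 1) (l2 + 1) (N + 1) (n + 1) (k + 1) * poch (-x) (k + 1) +
          ((l1 : ℚ) + 1) * ((N : ℚ) + 1) := by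
        rw [hahnQ_eq_sum_range _ _ _ (Nat.lt_succ_self _), mul_sum, sum_range_succ']
        simp [mul_assoc]
    _ = ∑ k ∈ range (n + 1), (((l1 : ℚ) - k) * ((N : ℚ) - k) * hahnCoeff l1 l2 N n (k + 1) +
            ((l1 : ℚ) + l2 + 2 - k) * hahnCoeff l1 l2 N n k) * poch (-x) (k + 1) +
          ((l1 : ℚ) + 1) * ((N : ℚ) + 1) := by
        simp only [hahnCoeff_contiguous l1 l2 N h1 hN]
    _ = ∑ k ∈ range (n + 1 + 1), hahnCoeff l1 l2 N n k *
          (((l1 : ℚ) + 1 - k) * ((N : ℚ) + 1 - k) * poch (-x) k +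
            ((l1 : ℚ) + 1 + (N + 1) + (l2 - N) - k) * poch (-x) (k + 1)) := by
        simp only [mul_add, sum_add_distrib]
        rw [sum_range_succ' _ (n + 1), sum_range_succ _ (n + 1),
          hahnCoeff_eq_zero_of_lt _ _ _ n.lt_add_one]
        simp only [hahnCoeff_zero_right, poch_zero, zero_mul, add_zero]
        conv_rhs => rw [add_right_comm, ← sum_add_distrib]
        congr 1
        · exact sum_congr rfl fun k _ => by push_cast; ring
        · ring
    _ = _ := by
        rw [hahnQ_eq_sum_range _ _ _ hK x, hahnQ_eq_sum_range _ _ _ hK (x - 1), mul_sum, mul_sum,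
          ← sum_sub_distrib]
        refine sum_congr rfl fun k _ => ?_
        rw [← poch_lowering]
        ring

/-- The cut-off is needed: by truncated subtraction `l2.choose (N - x)` is `1` for `x > N`. -/
def hahnWeight (l1 l2 N x : ℕ) : ℚ :=
  if x ≤ N then (l1.choose x : ℚ) * l2.choose (N - x) else 0

theorem sum_range_hahnWeight (l1 l2 N : ℕ) :
    ∑ x ∈ range (N + 1), hahnWeight l1 l2 N x = (l1 + l2).choose N := by
  rw [Nat.add_choose_eq, Finset.Nat.sum_antidiagonal_eq_sum_range_succ_mk]
  push_cast
  exact sum_congr rfl fun x hx => if_pos (Nat.lt_succ_iff.1 (mem_range.1 hx))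

theorem sub_mul_sub_mul_hahnWeight_succ (l1 l2 N x : ℕ) :
    ((l1 : ℚ) + 1 - x) * ((N : ℚ) + 1 - x) * hahnWeight (l1 + 1) (l2 + 1) (N + 1) x =
      (l1 + 1) * (l2 + 1) * hahnWeight l1 l2 N x := by
  unfold hahnWeight
  split_ifs with h h'
  · have e : N + 1 - x = N - x + 1 := by omega
    have e' : (N : ℚ) + 1 - x = ((N - x : ℕ) : ℚ) + 1 := by push_cast [Nat.cast_sub h']; ring
    rw [e, e']
    linear_combination (((N - x : ℕ) : ℚ) + 1) * ((l2 + 1).choose (N - x + 1) : ℚ) *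
        cast_add_one_sub_mul_choose (R := ℚ) l1 x +
      (l1 + 1) * (l1.choose x : ℚ) * cast_add_one_mul_choose_add_one (R := ℚ) l2 (N - x)
  · obtain rfl : x = N + 1 := by omega
    push_cast
    ring
  · omega
  · simp

theorem succ_mul_mul_hahnWeight_succ_succ (l1 l2 N x : ℕ) :
    ((x : ℚ) + 1) * ((l2 : ℚ) - N + x + 1) * hahnWeight (l1 + 1) (l2 + 1) (N + 1) (x + 1) =
      (l1 + 1) * (l2 + 1) * hahnWeight l1 l2 N x := by
  unfold hahnWeight
  split_ifs with h h'
  · have e : N + 1 - (x + 1) = N - x := by omega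
    have e' : (l2 : ℚ) - N + x + 1 = l2 + 1 - ((N - x : ℕ) : ℚ) := by
      push_cast [Nat.cast_sub h']; ring
    rw [e, e']
    linear_combination ((l2 : ℚ) + 1 - ((N - x : ℕ) : ℚ)) * ((l2 + 1).choose (N - x) : ℚ) *
        cast_add_one_mul_choose_add_one (R := ℚ) l1 x +
      (l1 + 1) * (l1.choose x : ℚ) * cast_add_one_sub_mul_choose (R := ℚ) l2 (N - x)
  · omega
  · omega
  · simp

def hahnWeighted (l1 l2 N n x : ℕ) : ℚ :=
  hahnQ l1 l2 N n x * hahnWeight l1 l2 N x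

theorem hahnWeighted_succ_zero (l1 l2 N : ℕ) {n : ℕ} (h1 : n ≤ l1) (hN : n ≤ N) :
    ((N : ℚ) + 1) * hahnWeighted (l1 + 1) (l2 + 1) (N + 1) (n + 1) 0 =
      (l2 + 1) * hahnWeighted l1 l2 N n 0 := by
  have hl : (l1 : ℚ) + 1 ≠ 0 := by positivity
  apply mul_left_cancel₀ hl
  have hQ := hahnQ_lowering l1 l2 N h1 hN 0
  have hw := sub_mul_sub_mul_hahnWeight_succ l1 l2 N 0
  simp only [hahnWeighted, Nat.cast_zero, sub_zero, zero_mul] at hQ hw ⊢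
  linear_combination hahnWeight (l1 + 1) (l2 + 1) (N + 1) 0 * hQ +
    hahnQ l1 l2 N n 0 * hw

theorem hahnWeighted_succ_succ (l1 l2 N : ℕ) {n : ℕ} (h1 : n ≤ l1) (hN : n ≤ N) (x : ℕ) :
    ((N : ℚ) + 1) * hahnWeighted (l1 + 1) (l2 + 1) (N + 1) (n + 1) (x + 1) =
      (l2 + 1) * (hahnWeighted l1 l2 N n (x + 1) - hahnWeighted l1 l2 N n x) := by
  have hl : (l1 : ℚ) + 1 ≠ 0 := by positivity
  apply mul_left_cancel₀ hl
  have hQ := hahnQ_lowering l1 l2 N h1 hN (x + 1 : ℕ)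
  have hw₁ := sub_mul_sub_mul_hahnWeight_succ l1 l2 N (x + 1)
  have hw₂ := succ_mul_mul_hahnWeight_succ_succ l1 l2 N x
  simp only [hahnWeighted]
  push_cast at hQ hw₁ ⊢
  rw [add_sub_cancel_right] at hQ
  linear_combination hahnWeight (l1 + 1) (l2 + 1) (N + 1) (x + 1) * hQ +
    hahnQ l1 l2 N n (x + 1) * hw₁ - hahnQ l1 l2 N n x * hw₂

theorem hahnWeighted_eq_zero_of_lt (l1 l2 N n : ℕ) {x : ℕ} (hx : N < x) :
    hahnWeighted l1 l2 N n x = 0 := by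
  simp [hahnWeighted, hahnWeight, hx.not_ge]

theorem sum_mul_hahnWeighted_succ (l1 l2 N : ℕ) {n : ℕ} (h1 : n ≤ l1) (hN : n ≤ N)
    (p : ℕ → ℚ) :
    ((N : ℚ) + 1) *
        ∑ x ∈ range (N + 1 + 1), p x * hahnWeighted (l1 + 1) (l2 + 1) (N + 1) (n + 1) x =
      (l2 + 1) * ∑ x ∈ range (N + 1), (p x - p (x + 1)) * hahnWeighted l1 l2 N n x := by
  have hshift := (sum_range_succ' (fun x => p x * hahnWeighted l1 l2 N n x) (N + 1)).symm.trans
    (sum_range_succ (fun x => p x * hahnWeighted l1 l2 N n x) (N + 1))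
  rw [hahnWeighted_eq_zero_of_lt l1 l2 N n N.lt_add_one, mul_zero, add_zero] at hshift
  rw [mul_sum, sum_range_succ']
  simp only [mul_left_comm ((N : ℚ) + 1), hahnWeighted_succ_succ l1 l2 N h1 hN,
    hahnWeighted_succ_zero l1 l2 N h1 hN, mul_left_comm (p _) ((l2 : ℚ) + 1)]
  rw [← mul_sum, ← mul_add]
  congr 1
  simp only [mul_sub, sub_mul, sum_sub_distrib]
  linear_combination hshift

def hahnMoment (l1 l2 N n j : ℕ) : ℚ :=
  ∑ x ∈ range (N + 1), poch (-(x : ℚ)) j * hahnWeighted l1 l2 N n x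

theorem hahnMoment_succ_zero (l1 l2 N : ℕ) {n : ℕ} (h1 : n ≤ l1) (hN : n ≤ N) :
    hahnMoment (l1 + 1) (l2 + 1) (N + 1) (n + 1) 0 = 0 := by
  have h := sum_mul_hahnWeighted_succ l1 l2 N h1 hN fun _ => 1
  simp only [sub_self, zero_mul, sum_const_zero, mul_zero, one_mul] at h
  simpa [hahnMoment, show ((N : ℚ) + 1) ≠ 0 by positivity] using h

theorem hahnMoment_succ_succ (l1 l2 N : ℕ) {n : ℕ} (h1 : n ≤ l1) (hN : n ≤ N) (j : ℕ) :
    ((N : ℚ) + 1) * hahnMoment (l1 + 1) (l2 + 1) (N + 1) (n + 1) (j + 1) =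
      (l2 + 1) * (j + 1) * hahnMoment l1 l2 N n j := by
  rw [hahnMoment, sum_mul_hahnWeighted_succ l1 l2 N h1 hN, hahnMoment, mul_sum, mul_sum]
  refine sum_congr rfl fun x _ => ?_
  rw [Nat.cast_succ, neg_add, ← sub_eq_add_neg, poch_sub_poch_sub_one]
  ring

theorem hahnMoment_eq_zero_of_lt {n j : ℕ} (hj : j < n) {l1 l2 N : ℕ} (h1 : n ≤ l1)
    (h2 : n ≤ l2) (hN : n ≤ N) : hahnMoment l1 l2 N n j = 0 := by
  induction n generalizing j l1 l2 N with
  | zero => omega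
  | succ n ih =>
    obtain ⟨l1, rfl⟩ := Nat.exists_eq_add_of_le' (show 1 ≤ l1 by omega)
    obtain ⟨l2, rfl⟩ := Nat.exists_eq_add_of_le' (show 1 ≤ l2 by omega)
    obtain ⟨N, rfl⟩ := Nat.exists_eq_add_of_le' (show 1 ≤ N by omega)
    cases j with
    | zero => exact hahnMoment_succ_zero l1 l2 N (by omega) (by omega)
    | succ j =>
      have h := hahnMoment_succ_succ l1 l2 N (n := n) (by omega) (by omega) j
      rw [ih (by omega) (by omega) (by omega) (by omega), mul_zero] at h
      exact (mul_eq_zero.1 h).resolve_left (by positivity)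

theorem hahnQ_zero (l1 l2 N x : ℚ) : hahnQ l1 l2 N 0 x = 1 := by
  simp [hahnQ]

theorem hahnMoment_self {n : ℕ} {l1 l2 N : ℕ} (h1 : n ≤ l1) (h2 : n ≤ l2) (hN : n ≤ N) :
    poch (-(N : ℚ)) n * hahnMoment l1 l2 N n n =
      n.factorial * poch (-(l2 : ℚ)) n * (l1 + l2 - 2 * n).choose (N - n) := by
  induction n generalizing l1 l2 N with
  | zero => simp [hahnMoment, hahnWeighted, hahnQ_zero, sum_range_hahnWeight]
  | succ n ih =>
    obtain ⟨l1, rfl⟩ := Nat.exists_eq_add_of_le' (show 1 ≤ l1 by omega)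
    obtain ⟨l2, rfl⟩ := Nat.exists_eq_add_of_le' (show 1 ≤ l2 by omega)
    obtain ⟨N, rfl⟩ := Nat.exists_eq_add_of_le' (show 1 ≤ N by omega)
    have h := hahnMoment_succ_succ l1 l2 N (n := n) (by omega) (by omega) n
    have ih' := ih (l1 := l1) (l2 := l2) (N := N) (by omega) (by omega) (by omega)
    have e₁ : l1 + 1 + (l2 + 1) - 2 * (n + 1) = l1 + l2 - 2 * n := by omega
    have e₂ : N + 1 - (n + 1) = N - n := by omega
    have e₃ (a : ℕ) : -((a + 1 : ℕ) : ℚ) + 1 = -a := by push_cast; ring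
    rw [poch_succ', poch_succ', e₁, e₂, e₃, e₃, Nat.factorial_succ]
    push_cast at h ⊢
    linear_combination (-poch (-(N : ℚ)) n) * h - (l2 + 1) * (n + 1) * ih'

theorem choose_mul_poch_mul_poch {n : ℕ} {L N : ℕ} (hN : n ≤ N) (hL : N + n ≤ L) :
    (L.choose N : ℚ) * poch (-(N : ℚ)) n * poch ((N : ℚ) - L) n =
      (L - 2 * n).choose (N - n) * poch (-(L : ℚ)) (2 * n) := by
  induction n generalizing L N with
  | zero => simp
  | succ n ih =>
    obtain ⟨N, rfl⟩ := Nat.exists_eq_add_of_le' (show 1 ≤ N by omega)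
    obtain ⟨L, rfl⟩ := Nat.exists_eq_add_of_le' (show 2 ≤ L by omega)
    have ih' := ih (L := L) (N := N) (by omega) (by omega)
    have e₁ : L + 2 - 2 * (n + 1) = L - 2 * n := by omega
    have e₂ : N + 1 - (n + 1) = N - n := by omega
    have e₃ : 2 * (n + 1) = 2 * n + 1 + 1 := by ring
    have hL₁ := cast_add_one_sub_mul_choose (R := ℚ) L N
    have hL₂ := cast_add_one_mul_choose_add_one (R := ℚ) (L + 1) N
    rw [e₁, e₂, e₃, poch_succ', poch_succ', poch_succ', poch_succ']
    push_cast at hL₁ hL₂ ⊢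
    have f₁ : -((N : ℚ) + 1) + 1 = -N := by ring
    have f₂ : (N : ℚ) + 1 - (L + 2) + 1 = N - L := by ring
    have f₃ : -((L : ℚ) + 2) + 1 + 1 = -L := by ring
    rw [f₁, f₂, f₃]
    linear_combination (poch (-(N : ℚ)) n * poch ((N : ℚ) - L) n) *
        ((L + 1 - N) * hL₂ + (L + 2) * hL₁) + (L + 2) * (L + 1) * ih'

theorem sum_hahnQ_mul_hahnWeighted {n l1 l2 N : ℕ} (h1 : n ≤ l1) (h2 : n ≤ l2) (hN : n ≤ N) :
    ∑ x ∈ range (N + 1), hahnQ l1 l2 N n x * hahnWeighted l1 l2 N n x =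
      hahnCoeff l1 l2 N n n * hahnMoment l1 l2 N n n := by
  calc ∑ x ∈ range (N + 1), hahnQ l1 l2 N n x * hahnWeighted l1 l2 N n x
      = ∑ k ∈ range (n + 1), hahnCoeff l1 l2 N n k * hahnMoment l1 l2 N n k := by
        simp only [hahnMoment, hahnQ_eq_sum_range _ _ _ n.lt_add_one, sum_mul, mul_sum, mul_assoc]
        exact sum_comm
    _ = hahnCoeff l1 l2 N n n * hahnMoment l1 l2 N n n := by
        rw [sum_range_succ, sum_eq_zero fun k hk => ?_, zero_add]
        rw [hahnMoment_eq_zero_of_lt (mem_range.1 hk) h1 h2 hN, mul_zero]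

theorem sum_Icc_mul_hyperH (f : ℕ → ℚ) (l1 l2 N : ℕ) :
    ∑ x ∈ Icc (N - min l2 N) (min l1 N), f x * hyperH l1 l2 N x =
      (∑ x ∈ range (N + 1), f x * hahnWeight l1 l2 N x) / (l1 + l2).choose N := by
  rw [sum_div]
  refine sum_subset_zero_on_sdiff (fun x hx => ?_) (fun x hx => ?_) (fun x hx => ?_)
  · simp only [mem_Icc, mem_range] at hx ⊢
    omega
  · simp only [mem_sdiff, mem_Icc, mem_range] at hx
    have hw : (l1.choose x : ℚ) * l2.choose (N - x) = 0 := by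
      rcases Nat.lt_or_ge l1 x with h | h
      · rw [Nat.choose_eq_zero_of_lt h, Nat.cast_zero, zero_mul]
      · rw [Nat.choose_eq_zero_of_lt (show l2 < N - x by omega), Nat.cast_zero, mul_zero]
    rw [hahnWeight, if_pos (by omega), hw, mul_zero, zero_div]
  · rw [hyperH, hahnWeight, if_pos (by simp only [mem_Icc] at hx; omega)]
    ring

theorem hahnMoment_self_div_choose {n l1 l2 N : ℕ} (h1 : n ≤ l1) (h2 : n ≤ l2) (hN : n ≤ N)
    (hL : N + n ≤ l1 + l2) :
    hahnMoment l1 l2 N n n / (l1 + l2).choose N =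
      n.factorial * poch (-(l2 : ℚ)) n * poch ((N : ℚ) - (l1 + l2 : ℕ)) n /
        (poch (-((l1 + l2 : ℕ) : ℚ)) n * poch (-((l1 + l2 : ℕ) : ℚ) + n) n) := by
  have hM := hahnMoment_self h1 h2 hN
  have hC := choose_mul_poch_mul_poch hN hL
  rw [show poch (-((l1 + l2 : ℕ) : ℚ)) (2 * n) =
      poch (-((l1 + l2 : ℕ) : ℚ)) n * poch (-((l1 + l2 : ℕ) : ℚ) + n) n by
    rw [two_mul, poch_add]] at hC
  have hpN := poch_neg_natCast_ne_zero (R := ℚ) hN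
  have hpL := poch_neg_natCast_ne_zero (R := ℚ) (show n ≤ l1 + l2 by omega)
  have hpnL : poch (-((l1 + l2 : ℕ) : ℚ) + n) n ≠ 0 := by
    rw [neg_add_eq_sub]; exact poch_natCast_sub_natCast_ne_zero (by omega)
  have hCN : ((l1 + l2).choose N : ℚ) ≠ 0 := by exact_mod_cast (Nat.choose_pos (by omega)).ne'
  rw [div_eq_div_iff hCN (mul_ne_zero hpL hpnL)]
  apply mul_left_cancel₀ hpN
  linear_combination (poch (-((l1 + l2 : ℕ) : ℚ)) n * poch (-((l1 + l2 : ℕ) : ℚ) + n) n) * hM -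
    (n.factorial * poch (-(l2 : ℚ)) n) * hC

theorem hahnCoeff_mul_hahnMoment_self_div {n l1 l2 N : ℕ} (h1 : n ≤ l1) (h2 : n ≤ l2)
    (hN : n ≤ N) (hL : N + n ≤ l1 + l2) :
    hahnCoeff l1 l2 N n n * hahnMoment l1 l2 N n n / (l1 + l2).choose N =
      (-1) ^ n * (n.factorial : ℚ) * poch (-(l2 : ℚ)) n *
          poch (-(l1 : ℚ) - (l2 : ℚ) + N) n * ((l1 : ℚ) + l2 + 1 - n) /
        (poch (-(l1 : ℚ)) n * poch (-(l1 : ℚ) - (l2 : ℚ)) n * poch (-(N : ℚ)) n *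
          ((l1 : ℚ) + l2 + 1 - 2 * n)) := by
  rw [mul_div_assoc, hahnMoment_self_div_choose h1 h2 hN hL]
  set L := l1 + l2 with hLdef
  have hLQ : (l1 : ℚ) + l2 = L := by rw [hLdef]; push_cast; ring
  have eA : -(l1 : ℚ) - l2 + N = N - L := by rw [← hLQ]; ring
  have eB : -(l1 : ℚ) - l2 = -L := by rw [← hLQ]; ring
  have eC : (n : ℚ) - l1 - l2 - 1 = -L + n - 1 := by rw [← hLQ]; ring
  have hp₁ := poch_neg_natCast_ne_zero (R := ℚ) h1
  have hpN := poch_neg_natCast_ne_zero (R := ℚ) hN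
  have hpL := poch_neg_natCast_ne_zero (R := ℚ) (show n ≤ L by omega)
  have hpnL : poch (-(L : ℚ) + n) n ≠ 0 := by
    rw [neg_add_eq_sub]; exact poch_natCast_sub_natCast_ne_zero (by omega)
  have hden : (L : ℚ) + 1 - 2 * n ≠ 0 := by
    have : (2 * n : ℚ) ≤ L := by exact_mod_cast (show 2 * n ≤ L by omega)
    linarith
  have hs : poch (-(L : ℚ) + n - 1) n =
      ((L : ℚ) + 1 - n) * poch (-(L : ℚ) + n) n / ((L : ℚ) + 1 - 2 * n) := by
    rw [eq_div_iff hden]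
    linear_combination poch_sub_one_mul (-(L : ℚ) + n) n
  rw [hahnCoeff, poch_neg_natCast_self, eA, eB, eC, hLQ, hs]
  field_simp

theorem hahn_norm_general (N l1 l2 : ℕ)
    (h : N ≤ l1 + l2) (n : ℕ) (hn : n ≤ min l1 N + min l2 N - N) :
    ∑ x ∈ Finset.Icc (N - min l2 N) (min l1 N),
        hahnQ l1 l2 N n x ^ 2 * hyperH l1 l2 N x =
      (-1) ^ n * (n.factorial : ℚ) * poch (-(l2 : ℚ)) n *
          poch (-(l1 : ℚ) - (l2 : ℚ) + N) n * ((l1 : ℚ) + l2 + 1 - n) /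
        (poch (-(l1 : ℚ)) n * poch (-(l1 : ℚ) - (l2 : ℚ)) n * poch (-(N : ℚ)) n *
          ((l1 : ℚ) + l2 + 1 - 2 * n)) := by
  have hn₁ : n ≤ l1 := by omega
  have hn₂ : n ≤ l2 := by omega
  have hnN : n ≤ N := by omega
  have hNL : N + n ≤ l1 + l2 := by omega
  rw [sum_Icc_mul_hyperH, ← hahnCoeff_mul_hahnMoment_self_div hn₁ hn₂ hnN hNL,
    ← sum_hahnQ_mul_hahnWeighted hn₁ hn₂ hnN]
  simp only [sq, mul_assoc, hahnWeighted]

theorem hahn_norm (N l1 l2 : ℕ) (hN : 0 < N) (h1 : 0 < l1) (h2 : 0 < l2)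
    (h : N ≤ l1 + l2) (n : ℕ) (hn : n ≤ min l1 N + min l2 N - N) :
    ∑ x ∈ Finset.Icc (N - min l2 N) (min l1 N),
        hahnQ l1 l2 N n x ^ 2 * hyperH l1 l2 N x =
      (-1) ^ n * (n.factorial : ℚ) * poch (-(l2 : ℚ)) n *
          poch (-(l1 : ℚ) - (l2 : ℚ) + N) n * ((l1 : ℚ) + l2 + 1 - n) /
        (poch (-(l1 : ℚ)) n * poch (-(l1 : ℚ) - (l2 : ℚ)) n * poch (-(N : ℚ)) n *
          ((l1 : ℚ) + l2 + 1 - 2 * n)) :=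
  hahn_norm_general N l1 l2 h n hn
end

section
/- Let ℓ₁, ℓ₂ be positive integers and define a linear functional 𝓛 on polynomials of degree at most ℓ₁+ℓ₂ by 𝓛(x^k) = Σ_{j=0}^{k} (-k)_j (-ℓ₁)_j 2^j / (j! (-ℓ₁-ℓ₂)_j). Then for every integer m with 0 ≤ m ≤ ℓ₁+ℓ₂, 𝓛(((1-x)/2)^m) = (-ℓ₁)_m / (-ℓ₁-ℓ₂)_m. -/
/-- The moments `𝓛(x^k)` of the linear functional `𝓛`. -/
def momL (l1 l2 : ℕ) (k : ℕ) : ℚ :=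
  ∑ j ∈ Finset.range (k + 1),
    poch (-(k : ℚ)) j * poch (-(l1 : ℚ)) j * 2 ^ j /
      ((j.factorial : ℚ) * poch (-(l1 : ℚ) - (l2 : ℚ)) j)

open Finset Polynomial

lemma sum_range_choose_mul_neg_one_pow_mul_choose {R : Type*} [CommRing R] (m j : ℕ) :
    ∑ k ∈ range (m + 1), (m.choose k : R) * (-1) ^ k * k.choose j =
      if j = m then (-1) ^ m else 0 := by
  -- Compare coefficients of `X ^ j` in `∑ₖ C(m,k) (-(X+1))ᵏ = (-(X+1) + 1) ^ m = (-X) ^ m`.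
  have h : ∑ k ∈ range (m + 1), C ((m.choose k : R) * (-1) ^ k) * (X + 1) ^ k =
      C ((-1) ^ m) * X ^ m := by
    calc _ = (-(X + 1 : R[X]) + 1) ^ m := by
          rw [add_pow]
          refine sum_congr rfl fun k _ => ?_
          rw [one_pow, mul_one, neg_pow (X + 1 : R[X])]
          simp only [map_mul, map_pow, map_neg, map_one, map_natCast]
          ring
      _ = C ((-1) ^ m) * X ^ m := by
          rw [show -(X + 1 : R[X]) + 1 = C (-1) * X by rw [C_neg, C_1]; ring, mul_pow, C_pow]
  have hj := congrArg (coeff · j) h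
  simp only [finsetSum_coeff, coeff_C_mul, coeff_X_add_one_pow, coeff_X_pow, mul_ite, mul_one,
    mul_zero] at hj
  exact hj

def binomialTransform {R : Type*} [CommRing R] (a : ℕ → R) (k : ℕ) : R :=
  ∑ j ∈ range (k + 1), (k.choose j : R) * a j

theorem sum_range_choose_mul_neg_one_pow_mul_binomialTransform {R : Type*} [CommRing R]
    (a : ℕ → R) (m : ℕ) :
    ∑ k ∈ range (m + 1), (m.choose k : R) * (-1) ^ k * binomialTransform a k =
      (-1) ^ m * a m := by
  have extend (k : ℕ) (hk : k ∈ range (m + 1)) :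
      binomialTransform a k = ∑ j ∈ range (m + 1), (k.choose j : R) * a j :=
    sum_subset (range_subset_range.2 (mem_range.1 hk)) fun j _ hj => by
      rw [Nat.choose_eq_zero_of_lt (not_lt.1 (mem_range.not.1 hj)), Nat.cast_zero, zero_mul]
  calc _ = ∑ k ∈ range (m + 1), ∑ j ∈ range (m + 1),
          (m.choose k : R) * (-1) ^ k * k.choose j * a j :=
        sum_congr rfl fun k hk => by simp_rw [extend k hk, mul_sum, mul_assoc]
    _ = ∑ j ∈ range (m + 1),
          (∑ k ∈ range (m + 1), (m.choose k : R) * (-1) ^ k * k.choose j) * a j := by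
        simp_rw [sum_mul]
        exact sum_comm
    _ = (-1) ^ m * a m := by
        simp_rw [sum_range_choose_mul_neg_one_pow_mul_choose, ite_mul, zero_mul]
        rw [sum_ite_eq' (range (m + 1)), if_pos (self_mem_range_succ m)]

lemma poch_neg_natCast {R : Type*} [CommRing R] (k j : ℕ) :
    poch (-(k : R)) j = (-1) ^ j * j.factorial * k.choose j := by
  have : poch (-(k : R)) j = ∏ i ∈ range j, -((k : R) - i) :=
    prod_congr rfl fun i _ => by ring
  rw [this, prod_neg, card_range, ← descPochhammer_eval_eq_prod_range,
    descPochhammer_eval_eq_descFactorial, Nat.descFactorial_eq_factorial_mul_choose]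
  push_cast
  ring

lemma momL_eq_binomialTransform (l1 l2 k : ℕ) :
    momL l1 l2 k = binomialTransform
      (fun j => (-1) ^ j * poch (-(l1 : ℚ)) j * 2 ^ j / poch (-(l1 : ℚ) - (l2 : ℚ)) j) k := by
  refine sum_congr rfl fun j _ => ?_
  rw [poch_neg_natCast]
  have : (j.factorial : ℚ) ≠ 0 := by positivity
  field_simp

theorem functional_moments_general (l1 l2 : ℕ) :
    ∀ m : ℕ, m ≤ l1 + l2 →
      (1 / 2 ^ m : ℚ) *
          ∑ k ∈ Finset.range (m + 1), (m.choose k : ℚ) * (-1) ^ k * momL l1 l2 k =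
        poch (-(l1 : ℚ)) m / poch (-(l1 : ℚ) - (l2 : ℚ)) m := by
  intro m _
  simp_rw [momL_eq_binomialTransform, sum_range_choose_mul_neg_one_pow_mul_binomialTransform]
  field_simp
  rw [← pow_mul, Even.neg_one_pow ⟨m, by ring⟩, one_mul]

theorem functional_moments (l1 l2 : ℕ) (h1 : 0 < l1) (h2 : 0 < l2) :
    ∀ m : ℕ, m ≤ l1 + l2 →
      (1 / 2 ^ m : ℚ) *
          ∑ k ∈ Finset.range (m + 1), (m.choose k : ℚ) * (-1) ^ k * momL l1 l2 k =
        poch (-(l1 : ℚ)) m / poch (-(l1 : ℚ) - (l2 : ℚ)) m :=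
  functional_moments_general l1 l2
end

section
/- Let N ∈ ℕ and ℓ = (ℓ₁,...,ℓ_{d+1}) ∈ ℕ^{d+1} with ℓᵢ ≤ N for all i and ℓᵢ + ℓⱼ ≥ N for all i ≠ j. Then the cardinality of the polyhedral lattice set V = {x ∈ ℕ₀^d : xᵢ ≤ ℓᵢ for 1 ≤ i ≤ d, and N - ℓ_{d+1} ≤ x₁+···+x_d ≤ N} equals binom(N+d, d) - Σ_{k=1}^{d+1} binom(N - ℓ_k + d - 1, d). -/
open Finset

lemma hockey (d M : ℕ) : ∑ j ∈ range (M+1), (j+d).choose d = (M+d+1).choose (d+1) := by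
  induction M with
  | zero => simp
  | succ M ih =>
      rw [Finset.sum_range_succ, ih, show M+1+d = M+d+1 by omega,
        show M+d+1+1 = (M+d+1)+1 by omega, Nat.choose_succ_succ' (M+d+1) d]
      omega

lemma count_S (d : ℕ) : ∀ M B : ℕ, M ≤ B →
    ((Fintype.piFinset fun _ : Fin d => Iic B).filter fun x => ∑ i, x i ≤ M).card
      = (M + d).choose d := by
  induction d with
  | zero => intro M B h; simp
  | succ d ih =>
      intro M B h
      have hmem : ∀ x ∈ (Fintype.piFinset fun _ : Fin (d+1) => Iic B).filter
          (fun x => ∑ i, x i ≤ M), x 0 ∈ Iic M := by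
        intro x hx
        simp only [mem_filter, Fintype.mem_piFinset, mem_Iic] at hx ⊢
        exact le_trans (Finset.single_le_sum (f := x) (fun i _ => Nat.zero_le _) (mem_univ 0)) hx.2
      rw [Finset.card_eq_sum_card_fiberwise hmem]
      have hfiber : ∀ j ∈ Iic M,
          (((Fintype.piFinset fun _ : Fin (d+1) => Iic B).filter
            (fun x => ∑ i, x i ≤ M)).filter (fun x => x 0 = j)).card
          = ((M - j) + d).choose d := by
        intro j hj
        rw [mem_Iic] at hj
        rw [← ih (M - j) B (le_trans (Nat.sub_le _ _) h)]
        apply Finset.card_bij' (i := fun x _ => Fin.tail x) (j := fun y _ => Fin.cons j y)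
        case hi =>
          intro x hx
          simp only [mem_filter, Fintype.mem_piFinset, mem_Iic, Fin.sum_univ_succ,
            Fin.tail] at hx ⊢
          obtain ⟨⟨h1, h2⟩, h3⟩ := hx
          exact ⟨fun i => h1 i.succ, by omega⟩
        case hj =>
          intro y hy
          simp only [mem_filter, Fintype.mem_piFinset, mem_Iic, Fin.sum_univ_succ,
            Fin.cons_zero, Fin.cons_succ] at hy ⊢
          obtain ⟨h1, h2⟩ := hy
          refine ⟨⟨fun i => ?_, by omega⟩, trivial⟩
          induction i using Fin.cases with
          | zero => simpa using le_trans hj h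
          | succ i' => simpa using h1 i'
        case left_inv =>
          intro x hx
          simp only [mem_filter] at hx
          rw [← hx.2]
          exact Fin.cons_self_tail x
        case right_inv =>
          intro y _
          funext i; simp [Fin.tail_cons]
      rw [Finset.sum_congr rfl hfiber]
      have hIic : (Iic M) = range (M+1) := by ext i; simp [Nat.lt_succ_iff]
      rw [hIic]
      have hrefl := Finset.sum_range_reflect (fun j => (j + d).choose d) (M+1)
      calc ∑ j ∈ range (M+1), ((M - j) + d).choose d
          = ∑ j ∈ range (M+1), ((M + 1 - 1 - j) + d).choose d := by
            apply Finset.sum_congr rfl; intro j hj; norm_num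
        _ = ∑ j ∈ range (M+1), (j + d).choose d := hrefl
        _ = (M + d + 1).choose (d+1) := hockey d M
        _ = (M + (d+1)).choose (d+1) := by ring_nf

lemma count_shift (d N c : ℕ) (k : Fin d) (h : c < N) :
    ((Fintype.piFinset fun _ : Fin d => Iic N).filter
      fun x => (∑ i, x i ≤ N) ∧ c < x k).card
    = ((Fintype.piFinset fun _ : Fin d => Iic N).filter
      fun y => ∑ i, y i ≤ N - c - 1).card := by
  apply Finset.card_bij' (i := fun x _ => Function.update x k (x k - (c+1)))
    (j := fun y _ => Function.update y k (y k + (c+1)))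
  case hi =>
    intro x hx
    simp only [mem_filter, Fintype.mem_piFinset, mem_Iic] at hx ⊢
    obtain ⟨h1, h2, h3⟩ := hx
    have hsum : ∑ i, Function.update x k (x k - (c+1)) i
        = (x k - (c+1)) + ∑ i ∈ univ.erase k, x i := by
      rw [Finset.sum_update_of_mem (mem_univ k)]; rw [Finset.sdiff_singleton_eq_erase]
    have hx' : ∑ i, x i = x k + ∑ i ∈ univ.erase k, x i := by
      rw [Finset.add_sum_erase _ _ (mem_univ k)]
    constructor
    · intro i
      rcases eq_or_ne i k with rfl | hik
      · simp only [Function.update_self]; omega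
      · simp only [Function.update_of_ne hik]; exact h1 i
    · omega
  case hj =>
    intro y hy
    simp only [mem_filter, Fintype.mem_piFinset, mem_Iic] at hy ⊢
    obtain ⟨h1, h2⟩ := hy
    have hyk : y k ≤ ∑ i, y i :=
      Finset.single_le_sum (f := y) (fun i _ => Nat.zero_le _) (mem_univ k)
    have hsum : ∑ i, Function.update y k (y k + (c+1)) i
        = (y k + (c+1)) + ∑ i ∈ univ.erase k, y i := by
      rw [Finset.sum_update_of_mem (mem_univ k)]; rw [Finset.sdiff_singleton_eq_erase]
    have hy' : ∑ i, y i = y k + ∑ i ∈ univ.erase k, y i := by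
      rw [Finset.add_sum_erase _ _ (mem_univ k)]
    refine ⟨fun i => ?_, by omega, by simp only [Function.update_self]; omega⟩
    rcases eq_or_ne i k with rfl | hik
    · simp only [Function.update_self]; omega
    · simp only [Function.update_of_ne hik]; exact h1 i
  case left_inv =>
    intro x hx
    simp only [mem_filter] at hx
    funext i
    rcases eq_or_ne i k with rfl | hik
    · simp only [Function.update_self]; omega
    · simp [Function.update_of_ne hik]
  case right_inv =>
    intro y _
    funext i
    rcases eq_or_ne i k with rfl | hik
    · simp only [Function.update_self]; omega
    · simp [Function.update_of_ne hik]

theorem polyhedron_card (d N : ℕ) (hd : 0 < d) (hN : 0 < N) (ℓ : Fin (d + 1) → ℕ)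
    (hle : ∀ i, ℓ i ≤ N) (hsum : ∀ i j, i ≠ j → N ≤ ℓ i + ℓ j) :
    (((Fintype.piFinset fun i : Fin d => Finset.Iic (ℓ i.castSucc)).filter
        fun x : Fin d → ℕ =>
          N - ℓ (Fin.last d) ≤ ∑ i, x i ∧ ∑ i, x i ≤ N).card : ℤ) =
      ((N + d).choose d : ℤ) - ∑ k : Fin (d + 1), ((N - ℓ k + d - 1).choose d : ℤ) := by
  classical
  set T : Finset (Fin d → ℕ) := Fintype.piFinset fun _ : Fin d => Iic N with hT
  set A : Finset (Fin d → ℕ) := T.filter (fun x => ∑ i, x i ≤ N) with hA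
  have hsingle : ∀ (x : Fin d → ℕ) (i : Fin d), x i ≤ ∑ j, x j :=
    fun x i => Finset.single_le_sum (fun j _ => Nat.zero_le _) (mem_univ i)
  have hpair : ∀ (x : Fin d → ℕ) (i i' : Fin d), i ≠ i' → x i + x i' ≤ ∑ j, x j := by
    intro x i i' hii'
    have h1 : x i + ∑ j ∈ univ.erase i, x j = ∑ j, x j :=
      Finset.add_sum_erase _ _ (mem_univ i)
    have h2 : x i' ≤ ∑ j ∈ univ.erase i, x j :=
      Finset.single_le_sum (fun j _ => Nat.zero_le _) (by simp [hii'.symm])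
    omega
  set Q : (Fin d → ℕ) → Prop :=
    fun x => (∀ i : Fin d, x i ≤ ℓ i.castSucc) ∧ N - ℓ (Fin.last d) ≤ ∑ i, x i with hQ
  have hVeq : ((Fintype.piFinset fun i : Fin d => Finset.Iic (ℓ i.castSucc)).filter
        fun x : Fin d → ℕ =>
          N - ℓ (Fin.last d) ≤ ∑ i, x i ∧ ∑ i, x i ≤ N)
      = A.filter Q := by
    ext x
    simp only [mem_filter, Fintype.mem_piFinset, mem_Iic, hA, hT, hQ]
    constructor
    · rintro ⟨h1, h2, h3⟩; exact ⟨⟨fun i => le_trans (h1 i) (hle _), h3⟩, h1, h2⟩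
    · rintro ⟨⟨_, h3⟩, h1, h2⟩; exact ⟨h1, h2, h3⟩
  set B : Fin (d+1) → Finset (Fin d → ℕ) := fun k =>
    A.filter (fun x => (∃ i : Fin d, i.castSucc = k ∧ ℓ k < x i) ∨
      (k = Fin.last d ∧ ∑ i, x i < N - ℓ (Fin.last d))) with hB
  have hsplit : (A.filter Q).card + (A.filter (fun x => ¬ Q x)).card = A.card :=
    Finset.card_filter_add_card_filter_not _
  have hnegQ : A.filter (fun x => ¬ Q x) = univ.biUnion B := by
    ext x
    simp only [mem_biUnion, mem_univ, true_and, hB, mem_filter, hQ, not_and_or,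
      not_forall, not_le]
    constructor
    · rintro ⟨hxA, hq⟩
      rcases hq with ⟨i, hi⟩ | hlt
      · exact ⟨i.castSucc, hxA, Or.inl ⟨i, rfl, hi⟩⟩
      · exact ⟨Fin.last d, hxA, Or.inr ⟨rfl, hlt⟩⟩
    · rintro ⟨k, hxA, hk⟩
      refine ⟨hxA, ?_⟩
      rcases hk with ⟨i, rfl, hi⟩ | ⟨_, hlt⟩
      · exact Or.inl ⟨i, hi⟩
      · exact Or.inr hlt
  have hdisj : ∀ k ∈ (univ : Finset (Fin (d+1))), ∀ k' ∈ univ,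
      k ≠ k' → Disjoint (B k) (B k') := by
    intro k _ k' _ hkk'
    rw [Finset.disjoint_left]
    intro x hxk hxk'
    simp only [hB, mem_filter, hA] at hxk hxk'
    obtain ⟨⟨_, hxN⟩, hk⟩ := hxk
    obtain ⟨_, hk'⟩ := hxk'
    rcases hk with ⟨i, hik, hi⟩ | ⟨hkl, hlt⟩ <;>
      rcases hk' with ⟨i', hik', hi'⟩ | ⟨hk'l, hlt'⟩
    · have hii' : i ≠ i' := by
        rintro rfl; exact hkk' (hik ▸ hik' ▸ rfl)
      have := hsum k k' hkk'
      have := hpair x i i' hii'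
      omega
    · have := hsum k k' hkk'
      have := hsingle x i
      have := hle (Fin.last d)
      subst hk'l
      omega
    · have := hsum k k' hkk'
      have := hsingle x i'
      have := hle (Fin.last d)
      subst hkl
      omega
    · exact hkk' (hkl.trans hk'l.symm)
  have hchoose0 : (d - 1).choose d = 0 := Nat.choose_eq_zero_of_lt (by omega)
  have hcard : ∀ k : Fin (d+1), (B k).card = (N - ℓ k + d - 1).choose d := by
    intro k
    induction k using Fin.lastCases with
    | last =>
        rcases eq_or_lt_of_le (hle (Fin.last d)) with heq | hlt
        · have hemp : B (Fin.last d) = ∅ := by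
            rw [Finset.eq_empty_iff_forall_notMem]
            intro x hx
            simp only [hB, mem_filter] at hx
            rcases hx.2 with ⟨i, hik, _⟩ | ⟨_, hlt'⟩
            · exact (Fin.castSucc_lt_last i).ne hik
            · omega
          rw [hemp, heq]
          simpa using hchoose0.symm
        · have hBeq : B (Fin.last d)
              = T.filter (fun x => ∑ i, x i ≤ N - ℓ (Fin.last d) - 1) := by
            ext x
            simp only [hB, hA, mem_filter]
            constructor
            · rintro ⟨⟨hxT, hxN⟩, hbad⟩
              rcases hbad with ⟨i, hik, _⟩ | ⟨_, hlt'⟩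
              · exact absurd hik (Fin.castSucc_lt_last i).ne
              · exact ⟨hxT, by omega⟩
            · rintro ⟨hxT, hs⟩
              exact ⟨⟨hxT, by omega⟩, Or.inr ⟨trivial, by omega⟩⟩
          rw [hBeq, hT, count_S d (N - ℓ (Fin.last d) - 1) N (by omega)]
          congr 1
          omega
    | cast i =>
        have hne : i.castSucc ≠ Fin.last d := (Fin.castSucc_lt_last i).ne
        have hBeq : B i.castSucc
            = T.filter (fun x => (∑ j, x j ≤ N) ∧ ℓ i.castSucc < x i) := by
          ext x
          simp only [hB, hA, mem_filter]
          constructor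
          · rintro ⟨⟨hxT, hxN⟩, hbad⟩
            rcases hbad with ⟨i', hik, hi'⟩ | ⟨hkl, _⟩
            · have : i' = i := Fin.castSucc_injective d hik
              subst this
              exact ⟨hxT, hxN, hi'⟩
            · exact absurd hkl hne
          · rintro ⟨hxT, hxN, hi'⟩
            exact ⟨⟨hxT, hxN⟩, Or.inl ⟨i, rfl, hi'⟩⟩
        rcases eq_or_lt_of_le (hle i.castSucc) with heq | hlt
        · have hemp : B i.castSucc = ∅ := by
            rw [Finset.eq_empty_iff_forall_notMem]
            intro x hx
            rw [hBeq, mem_filter] at hx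
            have := hsingle x i
            omega
          rw [hemp, heq]
          simpa using hchoose0.symm
        · rw [hBeq, hT, count_shift d N (ℓ i.castSucc) i hlt,
            count_S d (N - ℓ i.castSucc - 1) N (by omega)]
          congr 1
          omega
  have hA_card : A.card = (N + d).choose d := count_S d N N le_rfl
  have hfinal : (A.filter Q).card
      + ∑ k : Fin (d+1), (N - ℓ k + d - 1).choose d = (N + d).choose d := by
    rw [← hA_card, ← hsplit, hnegQ, Finset.card_biUnion hdisj]
    congr 1
    exact Finset.sum_congr rfl (fun k _ => (hcard k).symm)
  rw [hVeq, eq_sub_iff_add_eq]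
  exact_mod_cast hfinal
end
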